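/- arXiv:2306.03894 — 9 statements merged into one kernel-verified Lean document; each statement's English description precedes it below -/
import Mathlib

section
/- Let (X, α) be a productive labelled transition system over a finite nonempty alphabet A. Then for all states x, y ∈ X, the sets of streams emitted coincide if and only if the trace sets coincide: str(x) = str(y) ↔ tr(x) = tr(y). -/
open Filter Topology

/-- `IsTrace α x w` : the word `w` labels a path starting at `x` in the LTS `(X, α)`. -/
inductive IsTrace {X A : Type} (α : X → Set (A × X)) : X → List A → Prop
  | nil (x : X) : IsTrace α x []
  | cons {x y : X} {a : A} {w : List A} :
      (a, y) ∈ α x → IsTrace α y w → IsTrace α x (a :: w)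

/-- The trace set of a state `x`. -/
def tr {X A : Type} (α : X → Set (A × X)) (x : X) : Set (List A) :=
  {w | IsTrace α x w}

/-- The set of streams emitted by a state `x`. -/
def str {X A : Type} (α : X → Set (A × X)) (x : X) : Set (ℕ → A) :=
  {s | ∀ n : ℕ, (List.ofFn fun i : Fin n => s i.val) ∈ tr α x}

/-- Path with endpoint. -/
inductive PathTo {X A : Type} (α : X → Set (A × X)) : X → List A → X → Prop
  | nil (x : X) : PathTo α x [] x
  | cons {x y z : X} {a : A} {w : List A} :
      (a, y) ∈ α x → PathTo α y w z → PathTo α x (a :: w) z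

theorem isTrace_iff_pathTo {X A : Type} (α : X → Set (A × X)) (x : X) (w : List A) :
    IsTrace α x w ↔ ∃ z, PathTo α x w z := by
  constructor
  · intro h
    induction h with
    | nil x => exact ⟨x, PathTo.nil x⟩
    | cons h _ ih => exact ⟨ih.choose, PathTo.cons h ih.choose_spec⟩
  · rintro ⟨z, h⟩
    induction h with
    | nil x => exact IsTrace.nil x
    | cons h _ ih => exact IsTrace.cons h ih

theorem pathTo_append {X A : Type} {α : X → Set (A × X)} {x z : X} {w v : List A}
    (h : PathTo α x w z) (h2 : IsTrace α z v) : IsTrace α x (w ++ v) := by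
  induction h with
  | nil x => exact h2
  | cons h _ ih => exact IsTrace.cons h (ih h2)

theorem isTrace_take {X A : Type} {α : X → Set (A × X)} {x : X} {w : List A}
    (h : IsTrace α x w) : ∀ n, IsTrace α x (w.take n) := by
  induction h with
  | nil x => intro n; simpa using IsTrace.nil x
  | cons h _ ih =>
    intro n
    cases n with
    | zero => exact IsTrace.nil _
    | succ n => exact IsTrace.cons h (ih n)

/-- Labels of the canonical infinite extension from `u` using choice function `f`. -/
def chainLab {X A : Type} (f : X → A × X) : X → ℕ → A
  | u, 0 => (f u).1
  | u, n + 1 => chainLab f (f u).2 n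

theorem chain_isTrace {X A : Type} {α : X → Set (A × X)} {f : X → A × X}
    (hf : ∀ u, f u ∈ α u) : ∀ (m : ℕ) (u : X),
    IsTrace α u (List.ofFn fun i : Fin m => chainLab f u i) := by
  intro m
  induction m with
  | zero => intro u; simpa using IsTrace.nil u
  | succ m ih =>
    intro u
    rw [List.ofFn_succ]
    exact IsTrace.cons (hf u) (by simpa [chainLab] using ih (f u).2)

/-- In a productive LTS over a finite nonempty alphabet, two states emit the
same streams iff they have the same trace sets. -/
theorem str_eq_iff_tr_eq {X A : Type} [Fintype A] [Nonempty A]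
    (α : X → Set (A × X)) (hprod : ∀ x, α x ≠ ∅) (x y : X) :
    str α x = str α y ↔ tr α x = tr α y := by
  choose f hf using fun u => Set.nonempty_iff_ne_empty.2 (hprod u)
  constructor
  · intro h
    -- key: every trace extends to an emitted stream
    have key : ∀ (u : X) (w : List A), w ∈ tr α u →
        ∃ s ∈ str α u, (List.ofFn fun i : Fin w.length => s i.val) = w := by
      intro u w hw
      obtain ⟨z, hz⟩ := (isTrace_iff_pathTo α u w).1 hw
      refine ⟨fun n => if h : n < w.length then w.get ⟨n, h⟩ else chainLab f z (n - w.length),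
        ?_, ?_⟩
      · intro n
        by_cases hn : n ≤ w.length
        · have : (List.ofFn fun i : Fin n =>
              if h : (i : ℕ) < w.length then w.get ⟨i, h⟩ else chainLab f z (i - w.length))
              = w.take n := by
            apply List.ext_getElem
            · simp [Nat.min_eq_left hn]
            · intro i h1 h2
              have : i < w.length := lt_of_lt_of_le (by simpa using h1) hn
              simp [this]
          rw [tr, Set.mem_setOf_eq, this]
          exact isTrace_take hw n
        · push_neg at hn
          have : (List.ofFn fun i : Fin n =>
              if h : (i : ℕ) < w.length then w.get ⟨i, h⟩ else chainLab f z (i - w.length))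
              = w ++ List.ofFn fun i : Fin (n - w.length) => chainLab f z i := by
            apply List.ext_getElem
            · simp; omega
            · intro i h1 h2
              by_cases hi : i < w.length
              · simp [hi, List.getElem_append, List.getElem_ofFn]
              · push_neg at hi
                have hi2 : i - w.length < n - w.length := by simp at h1; omega
                simp [List.getElem_append, List.getElem_ofFn, Nat.lt_irrefl, hi,
                  Nat.not_lt.2 hi]
          rw [tr, Set.mem_setOf_eq, this]
          exact pathTo_append hz (chain_isTrace hf _ z)
      · apply List.ext_getElem (by simp)
        intro i h1 h2
        simp [h2]
    ext w
    constructor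
    · intro hw
      obtain ⟨s, hs, hsw⟩ := key x w hw
      rw [h] at hs
      rw [← hsw]; exact hs w.length
    · intro hw
      obtain ⟨s, hs, hsw⟩ := key y w hw
      rw [← h] at hs
      rw [← hsw]; exact hs w.length
  · intro h
    unfold str
    rw [h]
end

section
/- Let M be a nonempty complete metric space, A a finite nonempty set, and σ a contraction operator interpretation of A on M (each σ_a Lipschitz with constant c_a < 1). Then for every stream s : ℕ → A there exists a point L ∈ M such that for every starting point p ∈ M, the sequence n ↦ (σ_{s 0} ∘ σ_{s 1} ∘ ⋯ ∘ σ_{s n})(p) converges to L; in particular the limit exists and is independent of p. -/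
open Filter Topology
open scoped NNReal

/-- `seqApp σ s p n = (σ_{s 0} ∘ σ_{s 1} ∘ ⋯ ∘ σ_{s n}) p`. -/
def seqApp {A M : Type} (σ : A → M → M) (s : ℕ → A) (p : M) (n : ℕ) : M :=
  (List.ofFn fun i : Fin (n + 1) => s i.val).foldr (fun a m => σ a m) p

lemma seqApp_succ {A M : Type} (σ : A → M → M) (s : ℕ → A) (p : M) (n : ℕ) :
    seqApp σ s p (n + 1) = seqApp σ s (σ (s (n + 1)) p) n := by
  simp only [seqApp, List.ofFn_succ']
  simp [List.foldr_concat]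

/-- For a contraction operator interpretation `σ` of a finite nonempty alphabet `A`
on a nonempty complete metric space `M`, for every stream `s` there is a point `L`
such that for every starting point `p` the sequence
`n ↦ (σ_{s 0} ∘ ⋯ ∘ σ_{s n}) p` converges to `L`. -/
theorem exists_lim_of_stream {A M : Type} [Fintype A] [Nonempty A]
    [MetricSpace M] [CompleteSpace M] [Nonempty M]
    (σ : A → M → M) (c : A → ℝ≥0) (hc : ∀ a, c a < 1)
    (hσ : ∀ a, LipschitzWith (c a) (σ a)) (s : ℕ → A) :
    ∃ L : M, ∀ p : M, Tendsto (fun n => seqApp σ s p n) atTop (𝓝 L) := by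
  set q : ℝ≥0 := Finset.univ.sup c with hqdef
  have hcq : ∀ a, c a ≤ q := fun a => Finset.le_sup (Finset.mem_univ a)
  have hq1 : q < 1 := by
    rw [hqdef]
    exact Finset.sup_lt_iff (by norm_num) |>.2 fun a _ => hc a
  have hq1' : (q : ℝ) < 1 := by exact_mod_cast hq1
  have hq0 : (0:ℝ) ≤ q := q.coe_nonneg
  -- key contraction estimate
  have key : ∀ (n : ℕ) (p p' : M),
      dist (seqApp σ s p n) (seqApp σ s p' n) ≤ (q:ℝ) ^ (n + 1) * dist p p' := by
    intro n
    induction n with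
    | zero =>
      intro p p'
      have := (hσ (s 0)).dist_le_mul p p'
      simp only [seqApp, List.ofFn_succ, List.ofFn_zero, List.foldr]
      calc dist (σ (s 0) p) (σ (s 0) p') ≤ (c (s 0) : ℝ) * dist p p' := this
        _ ≤ (q:ℝ) ^ (0+1) * dist p p' := by
            simp only [zero_add, pow_one]
            gcongr
            exact_mod_cast hcq (s 0)
    | succ n ih =>
      intro p p'
      rw [seqApp_succ, seqApp_succ]
      calc dist (seqApp σ s (σ (s (n+1)) p) n) (seqApp σ s (σ (s (n+1)) p') n)
          ≤ (q:ℝ) ^ (n + 1) * dist (σ (s (n+1)) p) (σ (s (n+1)) p') := ih _ _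
        _ ≤ (q:ℝ) ^ (n + 1) * ((c (s (n+1)) : ℝ) * dist p p') :=
            mul_le_mul_of_nonneg_left ((hσ _).dist_le_mul p p') (by positivity)
        _ ≤ (q:ℝ) ^ (n + 1) * ((q:ℝ) * dist p p') := by
            gcongr
            exact_mod_cast hcq _
        _ = (q:ℝ) ^ (n + 1 + 1) * dist p p' := by ring
  obtain ⟨p0⟩ := ‹Nonempty M›
  set D : ℝ := Finset.univ.sup' Finset.univ_nonempty (fun a => dist (σ a p0) p0) with hDdef
  have hD : ∀ a, dist (σ a p0) p0 ≤ D := fun a =>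
    Finset.le_sup' (fun a => dist (σ a p0) p0) (Finset.mem_univ a)
  have hcauchy : CauchySeq (fun n => seqApp σ s p0 n) := by
    apply cauchySeq_of_le_geometric (q:ℝ) ((q:ℝ) * D) hq1'
    intro n
    rw [dist_comm, seqApp_succ]
    calc dist (seqApp σ s (σ (s (n+1)) p0) n) (seqApp σ s p0 n)
        ≤ (q:ℝ) ^ (n + 1) * dist (σ (s (n+1)) p0) p0 := key n _ _
      _ ≤ (q:ℝ) ^ (n + 1) * D :=
          mul_le_mul_of_nonneg_left (hD _) (by positivity)
      _ = (q:ℝ) * D * (q:ℝ) ^ n := by ring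
  obtain ⟨L, hL⟩ := cauchySeq_tendsto_of_complete hcauchy
  refine ⟨L, fun p => ?_⟩
  have hdist : Tendsto (fun n => dist (seqApp σ s p n) (seqApp σ s p0 n)) atTop (𝓝 0) := by
    have hgeo : Tendsto (fun n : ℕ => (q:ℝ) ^ (n+1) * dist p p0) atTop (𝓝 0) := by
      have := (tendsto_pow_atTop_nhds_zero_of_lt_one hq0 hq1').comp
        (tendsto_add_atTop_nat 1)
      simpa using this.mul_const (dist p p0)
    exact squeeze_zero (fun n => dist_nonneg) (fun n => key n p p0) hgeo
  exact hL.congr_dist (by simpa [dist_comm] using hdist)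
end

section
/- Let (X, α) be a finite productive labelled transition system over a finite nonempty alphabet A, let M be a nonempty complete metric space, and let σ be a contraction operator interpretation of A on M with each σ_a Lipschitz of constant c_a < 1. Let c = max_{a ∈ A} c_a. Then the operator [α] on the X-indexed families of nonempty compact subsets of M, defined by ([α]F)(x) = ⋃_{(a,y) ∈ α x} σ_a '' F(y), is Lipschitz with constant c < 1 with respect to the metric d(F, G) = max_{x ∈ X} d_H(F(x), G(x)), where d_H is the Hausdorff metric on nonempty compact subsets of M. -/
open Filter Topology TopologicalSpace
open scoped NNReal ENNReal

private lemma key_half {X A M : Type} [Fintype X] [Fintype A] [MetricSpace M]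
    (α : X → Set (A × X))
    (σ : A → M → M) (c : A → ℝ≥0)
    (hσ : ∀ a, LipschitzWith (c a) (σ a))
    (T : (X → NonemptyCompacts M) → (X → NonemptyCompacts M))
    (hT : ∀ (F : X → NonemptyCompacts M) (x : X),
      (T F x : Set M) = ⋃ p ∈ α x, σ p.1 '' (F p.2 : Set M))
    (F G : X → NonemptyCompacts M) (x : X) :
    ∀ u ∈ (T F x : Set M), ∃ v ∈ (T G x : Set M),
      edist u v ≤ ((Finset.univ.sup c : ℝ≥0) : ℝ≥0∞) * edist F G := by
  classical
  intro u hu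
  rw [hT, Set.mem_iUnion₂] at hu
  obtain ⟨p, hp, w, hw, rfl⟩ := hu
  obtain ⟨v, hv, hvd⟩ := (G p.2).isCompact.exists_infEdist_eq_edist (G p.2).nonempty w
  refine ⟨σ p.1 v, ?_, ?_⟩
  · rw [hT, Set.mem_iUnion₂]
    exact ⟨p, hp, v, hv, rfl⟩
  · calc edist (σ p.1 w) (σ p.1 v) ≤ (c p.1 : ℝ≥0∞) * edist w v := (hσ p.1) w v
    _ ≤ ((Finset.univ.sup c : ℝ≥0) : ℝ≥0∞) * edist F G := by
        refine mul_le_mul' (ENNReal.coe_le_coe.2 (Finset.le_sup (Finset.mem_univ p.1))) ?_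
        rw [← hvd]
        calc EMetric.infEdist w (G p.2 : Set M)
            ≤ EMetric.hausdorffEdist (F p.2 : Set M) (G p.2 : Set M) :=
              EMetric.infEdist_le_hausdorffEdist_of_mem hw
          _ = edist (F p.2) (G p.2) := rfl
          _ ≤ edist F G := edist_le_pi_edist F G p.2

/-- For a finite productive LTS `(X, α)` over a finite nonempty alphabet and a
contraction operator interpretation `σ` (with Lipschitz constants `c a < 1`) on a
nonempty complete metric space `M`, the operator `[α]` on `X`-indexed families of
nonempty compact subsets of `M` given by `([α] F) x = ⋃_{(a,y) ∈ α x} σ_a '' F y`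
is Lipschitz with constant `c = max_{a} c a < 1`, where `X → NonemptyCompacts M`
carries the sup (max) metric of the Hausdorff metric. -/
theorem system_operator_lipschitz {X A M : Type} [Fintype X] [Fintype A] [Nonempty A]
    [MetricSpace M] [CompleteSpace M] [Nonempty M]
    (α : X → Set (A × X)) (hfin : ∀ x, (α x).Finite) (hprod : ∀ x, α x ≠ ∅)
    (σ : A → M → M) (c : A → ℝ≥0) (hc : ∀ a, c a < 1)
    (hσ : ∀ a, LipschitzWith (c a) (σ a))
    (T : (X → NonemptyCompacts M) → (X → NonemptyCompacts M))
    (hT : ∀ (F : X → NonemptyCompacts M) (x : X),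
      (T F x : Set M) = ⋃ p ∈ α x, σ p.1 '' (F p.2 : Set M)) :
    Finset.univ.sup c < 1 ∧ LipschitzWith (Finset.univ.sup c) T := by
  constructor
  · exact Finset.sup_lt_iff (by norm_num) |>.2 fun a _ => hc a
  · intro F G
    rw [edist_pi_le_iff]
    intro x
    show EMetric.hausdorffEdist (T F x : Set M) (T G x : Set M) ≤ _
    refine EMetric.hausdorffEdist_le_of_mem_edist
      (key_half α σ c hσ T hT F G x) ?_
    intro v hv
    obtain ⟨u, hu, h⟩ := key_half α σ c hσ T hT G F x v hv
    exact ⟨u, hu, by rwa [edist_comm G F] at h⟩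
end

section
/- Let (X, α) be a finite productive labelled transition system over a finite nonempty alphabet A, let M be a nonempty complete metric space, and let σ be a contraction operator interpretation of A on M. Then there exists a unique function φ from X to the nonempty compact subsets of M such that φ(x) = ⋃_{(a,y) ∈ α x} σ_a '' φ(y) for every x ∈ X. -/
open Filter Topology TopologicalSpace
open scoped NNReal

/-- A finite productive LTS over a finite nonempty alphabet, together with a
contraction operator interpretation on a nonempty complete metric space, has a
unique solution: a unique assignment `φ` of nonempty compact subsets of `M` to
states such that `φ x = ⋃_{(a,y) ∈ α x} σ_a '' φ y` for every state `x`. -/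
theorem exists_unique_solution {X A M : Type} [Finite X] [Fintype A] [Nonempty A]
    [MetricSpace M] [CompleteSpace M] [Nonempty M]
    (α : X → Set (A × X)) (hfin : ∀ x, (α x).Finite) (hprod : ∀ x, α x ≠ ∅)
    (σ : A → M → M) (c : A → ℝ≥0) (hc : ∀ a, c a < 1)
    (hσ : ∀ a, LipschitzWith (c a) (σ a)) :
    ∃! φ : X → NonemptyCompacts M,
      ∀ x, (φ x : Set M) = ⋃ p ∈ α x, σ p.1 '' (φ p.2 : Set M) := by
  classical
  have : Fintype X := Fintype.ofFinite X
  obtain ⟨m0⟩ := ‹Nonempty M›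
  have : Nonempty (X → NonemptyCompacts M) :=
    ⟨fun _ => ⟨⟨{m0}, isCompact_singleton⟩, Set.singleton_nonempty m0⟩⟩
  set K : ℝ≥0 := Finset.univ.sup c with hK
  have hKlt : K < 1 := by
    rw [hK, Finset.sup_lt_iff (by norm_num : (0 : ℝ≥0) < 1)]
    exact fun a _ => hc a
  have hcK : ∀ a, c a ≤ K := fun a => Finset.le_sup (Finset.mem_univ a)
  -- the map whose fixed point is the solution
  set F : (X → NonemptyCompacts M) → (X → NonemptyCompacts M) := fun φ x =>
    ⟨⟨⋃ p ∈ α x, σ p.1 '' (φ p.2 : Set M),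
      (hfin x).isCompact_biUnion fun p _ => ((φ p.2).isCompact.image (hσ p.1).continuous)⟩,
      by
        obtain ⟨p, hp⟩ := Set.nonempty_iff_ne_empty.2 (hprod x)
        obtain ⟨m, hm⟩ := (φ p.2).nonempty
        exact ⟨σ p.1 m, Set.mem_biUnion hp ⟨m, hm, rfl⟩⟩⟩ with hF
  have hFcoe : ∀ φ x, ((F φ x : NonemptyCompacts M) : Set M)
      = ⋃ p ∈ α x, σ p.1 '' (φ p.2 : Set M) := fun φ x => rfl
  -- contraction
  have hlip : LipschitzWith K F := by
    intro φ ψ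
    rw [edist_pi_def]
    refine Finset.sup_le fun x _ => ?_
    have key : ∀ p ∈ α x, ∀ z ∈ σ p.1 '' (φ p.2 : Set M),
        ∃ w ∈ ⋃ q ∈ α x, σ q.1 '' (ψ q.2 : Set M), edist z w ≤ K * edist φ ψ := by
      rintro p hp z ⟨u, hu, rfl⟩
      obtain ⟨v, hv, hvd⟩ := (ψ p.2).isCompact.exists_infEdist_eq_edist (ψ p.2).nonempty u
      refine ⟨σ p.1 v, Set.mem_biUnion hp ⟨v, hv, rfl⟩, ?_⟩
      calc edist (σ p.1 u) (σ p.1 v) ≤ c p.1 * edist u v := (hσ p.1).edist_le_mul u v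
        _ ≤ K * edist φ ψ := by
            refine mul_le_mul' (ENNReal.coe_le_coe.2 (hcK p.1)) ?_
            rw [← hvd]
            calc EMetric.infEdist u (ψ p.2 : Set M)
                ≤ EMetric.hausdorffEdist (φ p.2 : Set M) (ψ p.2 : Set M) :=
                  EMetric.infEdist_le_hausdorffEdist_of_mem hu
              _ = edist (φ p.2) (ψ p.2) := rfl
              _ ≤ edist φ ψ := edist_le_pi_edist φ ψ p.2
    have key' : ∀ p ∈ α x, ∀ z ∈ σ p.1 '' (ψ p.2 : Set M),
        ∃ w ∈ ⋃ q ∈ α x, σ q.1 '' (φ q.2 : Set M), edist z w ≤ K * edist φ ψ := by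
      rintro p hp z ⟨u, hu, rfl⟩
      obtain ⟨v, hv, hvd⟩ := (φ p.2).isCompact.exists_infEdist_eq_edist (φ p.2).nonempty u
      refine ⟨σ p.1 v, Set.mem_biUnion hp ⟨v, hv, rfl⟩, ?_⟩
      calc edist (σ p.1 u) (σ p.1 v) ≤ c p.1 * edist u v := (hσ p.1).edist_le_mul u v
        _ ≤ K * edist φ ψ := by
            refine mul_le_mul' (ENNReal.coe_le_coe.2 (hcK p.1)) ?_
            rw [← hvd]
            calc EMetric.infEdist u (φ p.2 : Set M)
                ≤ EMetric.hausdorffEdist (ψ p.2 : Set M) (φ p.2 : Set M) :=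
                  EMetric.infEdist_le_hausdorffEdist_of_mem hu
              _ = edist (ψ p.2) (φ p.2) := rfl
              _ = edist (φ p.2) (ψ p.2) := edist_comm _ _
              _ ≤ edist φ ψ := edist_le_pi_edist φ ψ p.2
    show EMetric.hausdorffEdist ((F φ x : NonemptyCompacts M) : Set M)
        ((F ψ x : NonemptyCompacts M) : Set M) ≤ K * edist φ ψ
    rw [hFcoe, hFcoe]
    refine EMetric.hausdorffEdist_le_of_mem_edist ?_ ?_
    · intro z hz
      obtain ⟨p, hp, hz⟩ := Set.mem_iUnion₂.1 hz
      exact key p hp z hz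
    · intro z hz
      obtain ⟨p, hp, hz⟩ := Set.mem_iUnion₂.1 hz
      exact key' p hp z hz
  have hcontr : ContractingWith K F := ⟨hKlt, hlip⟩
  have hiff : ∀ φ : X → NonemptyCompacts M,
      (∀ x, (φ x : Set M) = ⋃ p ∈ α x, σ p.1 '' (φ p.2 : Set M)) ↔ Function.IsFixedPt F φ := by
    intro φ
    constructor
    · intro h
      funext x
      exact NonemptyCompacts.ext ((hFcoe φ x).trans (h x).symm)
    · intro h x
      conv_lhs => rw [← h]
      exact hFcoe φ x
  refine ⟨ContractingWith.fixedPoint F hcontr, (hiff _).2 hcontr.fixedPoint_isFixedPt, ?_⟩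
  intro ψ hψ
  exact hcontr.fixedPoint_unique ((hiff ψ).1 hψ)
end

section
/- Let (X, α) be a finite productive labelled transition system over a finite nonempty alphabet A, let M be a nonempty complete metric space, and let σ be a contraction operator interpretation of A on M. Then the function x ↦ σ_ω '' str(x) is a solution of (X, α): for every x ∈ X, σ_ω '' str(x) = ⋃_{(a,y) ∈ α x} σ_a '' (σ_ω '' str(y)). -/
open Filter Topology
open scoped NNReal

lemma isTrace_append_left {X A : Type} {α : X → Set (A × X)} :
    ∀ {w v : List A} {x : X}, IsTrace α x (w ++ v) → IsTrace α x w := by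
  intro w
  induction w with
  | nil => intro v x _; exact IsTrace.nil x
  | cons a w ih =>
    intro v x h
    cases h with
    | cons hm ht => exact IsTrace.cons hm (ih ht)

lemma trace_ofFn_mono {X A : Type} {α : X → Set (A × X)} {t : ℕ → A} {y : X}
    {n m : ℕ} (hnm : n ≤ m)
    (h : IsTrace α y (List.ofFn fun i : Fin m => t i.val)) :
    IsTrace α y (List.ofFn fun i : Fin n => t i.val) := by
  obtain ⟨k, rfl⟩ := Nat.exists_eq_add_of_le hnm
  rw [List.ofFn_add] at h
  exact isTrace_append_left h

lemma seqApp_cons {A M : Type} (σ : A → M → M) (a : A) (t : ℕ → A) (p : M) (n : ℕ) :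
    seqApp σ (fun n => Nat.casesOn n a t) p (n + 1) = σ a (seqApp σ t p n) := by
  simp [seqApp, List.ofFn_succ]

lemma sigma_omega_cons {A M : Type} [MetricSpace M]
    (σ : A → M → M) (c : A → ℝ≥0) (hσ : ∀ a, LipschitzWith (c a) (σ a))
    (σω : (ℕ → A) → M) [Nonempty M]
    (hσω : ∀ (s : ℕ → A) (p : M), Tendsto (fun n => seqApp σ s p n) atTop (𝓝 (σω s)))
    (a : A) (t : ℕ → A) :
    σω (fun n => Nat.casesOn n a t) = σ a (σω t) := by
  obtain ⟨p⟩ := ‹Nonempty M›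
  have h1 : Tendsto (fun n => seqApp σ (fun n => Nat.casesOn n a t) p (n + 1)) atTop
      (𝓝 (σω (fun n => Nat.casesOn n a t))) :=
    (hσω _ p).comp (tendsto_add_atTop_nat 1)
  have h2 : Tendsto (fun n => σ a (seqApp σ t p n)) atTop (𝓝 (σ a (σω t))) :=
    ((hσ a).continuous.tendsto _).comp (hσω t p)
  rw [funext fun n => seqApp_cons σ a t p n] at h1
  exact tendsto_nhds_unique h1 h2

/-- For a finite productive LTS and a contraction operator interpretation on a
nonempty complete metric space (with limit map `σω`), the function
`x ↦ σω '' str x` is a solution of the system `(X, α)`. -/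
theorem regular_subfractal_is_solution {X A M : Type} [Finite X]
    [Fintype A] [Nonempty A]
    [MetricSpace M] [CompleteSpace M] [Nonempty M]
    (α : X → Set (A × X)) (hfin : ∀ x, (α x).Finite) (hprod : ∀ x, α x ≠ ∅)
    (σ : A → M → M) (c : A → ℝ≥0) (hc : ∀ a, c a < 1)
    (hσ : ∀ a, LipschitzWith (c a) (σ a))
    (σω : (ℕ → A) → M)
    (hσω : ∀ (s : ℕ → A) (p : M), Tendsto (fun n => seqApp σ s p n) atTop (𝓝 (σω s))) :
    ∀ x : X, σω '' str α x = ⋃ p ∈ α x, σ p.1 '' (σω '' str α p.2) := by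
  intro x
  ext q
  simp only [Set.mem_image, Set.mem_iUnion, exists_prop]
  constructor
  · rintro ⟨s, hs, rfl⟩
    set a := s 0 with ha
    set t : ℕ → A := fun n => s (n + 1) with ht
    have hs' : s = fun n => Nat.casesOn n a t := by
      funext n; cases n <;> rfl
    have hstep : ∀ n : ℕ, ∃ y, (a, y) ∈ α x ∧
        IsTrace α y (List.ofFn fun i : Fin n => t i.val) := by
      intro n
      have h := hs (n + 1)
      rw [List.ofFn_succ] at h
      cases h with
      | cons hm htr => exact ⟨_, hm, htr⟩
    choose Y hY1 hY2 using hstep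
    obtain ⟨y, hy⟩ := Finite.exists_infinite_fiber Y
    have hy' : (Y ⁻¹' {y}).Infinite := Set.infinite_coe_iff.mp hy
    obtain ⟨n0, hn0⟩ := hy'.nonempty
    have hn0' : Y n0 = y := hn0
    refine ⟨(a, y), by rw [← hn0']; exact hY1 n0, σω t, ⟨t, ?_, rfl⟩, ?_⟩
    · intro n
      obtain ⟨m, hm, hnm⟩ := hy'.exists_gt n
      have := hY2 m
      rw [Set.mem_preimage, Set.mem_singleton_iff] at hm
      rw [hm] at this
      exact trace_ofFn_mono hnm.le this
    · rw [hs']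
      exact (sigma_omega_cons σ c hσ σω hσω a t).symm
  · rintro ⟨⟨a, y⟩, hm, q, ⟨s, hs, rfl⟩, rfl⟩
    refine ⟨fun n => Nat.casesOn n a s, ?_, sigma_omega_cons σ c hσ σω hσω a s⟩
    intro n
    cases n with
    | zero => exact IsTrace.nil x
    | succ n =>
      rw [List.ofFn_succ]
      exact IsTrace.cons hm (hs n)
end

section
/- Let (X, α) and (Y, β) be finite productive labelled transition systems over a finite nonempty alphabet A, let f : X → Y be an LTS homomorphism (β(f(x)) = { (a, f(y)) | (a, y) ∈ α x } for all x), let M be a nonempty complete metric space, and let σ be a contraction operator interpretation of A on M. If φ_α and φ_β are the unique solutions of (X, α) and (Y, β) respectively, then φ_α = φ_β ∘ f. -/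
/-!
Composing with the homomorphism `f` turns the solution `φβ` of `(Y, β)` into a solution
`φβ ∘ f` of `(X, α)`, so it suffices that `(X, α)` has at most one solution. Nonempty compact
sets form a metric space under the Hausdorff distance. With `C := max_a c_a < 1`, each `σ_a`
scales Hausdorff distances between compact sets by at most `C`, and Hausdorff distance of
unions is bounded by the largest distance of the pieces; hence the (finite) sup distance `D`
between two solutions satisfies `D ≤ C * D`, forcing `D = 0`.
-/

open TopologicalSpace
open scoped NNReal ENNReal
open Metric

theorem ENNReal.eq_zero_of_le_mul_of_lt_one {x C : ℝ≥0∞} (hx : x ≠ ∞) (hC : C < 1)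
    (h : x ≤ C * x) : x = 0 := by
  by_contra hx0
  exact (h.trans_lt ((ENNReal.mul_lt_mul_left hx0 hx hC).trans_eq (one_mul x))).false

theorem Metric.hausdorffEDist_biUnion_le {ι α : Type*} [PseudoEMetricSpace α] (I : Set ι)
    (s t : ι → Set α) :
    hausdorffEDist (⋃ i ∈ I, s i) (⋃ i ∈ I, t i) ≤
      ⨆ i ∈ I, hausdorffEDist (s i) (t i) :=
  hausdorffEDist_iUnion_le.trans (iSup_mono fun _ => hausdorffEDist_iUnion_le)

namespace LipschitzWith

variable {α β : Type*} [PseudoEMetricSpace α] [PseudoEMetricSpace β] {K : ℝ≥0}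
  {f : α → β}

theorem infEDist_image_le (hf : LipschitzWith K f) (x : α) {t : Set α} (ht : IsCompact t)
    (ht' : t.Nonempty) : infEDist (f x) (f '' t) ≤ K * infEDist x t := by
  obtain ⟨y, hy, hxy⟩ := ht.exists_infEDist_eq_edist ht' x
  calc infEDist (f x) (f '' t)
      ≤ edist (f x) (f y) := infEDist_le_edist_of_mem (Set.mem_image_of_mem f hy)
    _ ≤ K * edist x y := hf.edist_le_mul x y
    _ = K * infEDist x t := by rw [hxy]

theorem hausdorffEDist_image_le (hf : LipschitzWith K f) {s t : Set α} (hs : IsCompact s)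
    (hs' : s.Nonempty) (ht : IsCompact t) (ht' : t.Nonempty) :
    hausdorffEDist (f '' s) (f '' t) ≤ K * hausdorffEDist s t := by
  refine hausdorffEDist_le_of_infEDist ?_ ?_
  · rintro _ ⟨x, hx, rfl⟩
    exact (hf.infEDist_image_le x ht ht').trans
      (mul_le_mul_right (infEDist_le_hausdorffEDist_of_mem hx) _)
  · rintro _ ⟨x, hx, rfl⟩
    rw [hausdorffEDist_comm]
    exact (hf.infEDist_image_le x hs hs').trans
      (mul_le_mul_right (infEDist_le_hausdorffEDist_of_mem hx) _)

end LipschitzWith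

def IsLTSSolution {X A M : Type*} [TopologicalSpace M] (α : X → Set (A × X))
    (σ : A → M → M) (φ : X → NonemptyCompacts M) : Prop :=
  ∀ x, (φ x : Set M) = ⋃ p ∈ α x, σ p.1 '' (φ p.2 : Set M)

namespace IsLTSSolution

variable {X Y A M : Type*} {α : X → Set (A × X)} {σ : A → M → M}

theorem comp_hom [TopologicalSpace M] {β : Y → Set (A × Y)} {ψ : Y → NonemptyCompacts M}
    (hψ : IsLTSSolution β σ ψ) {f : X → Y}
    (hf : ∀ x, β (f x) = (fun p : A × X => (p.1, f p.2)) '' α x) :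
    IsLTSSolution α σ (ψ ∘ f) := fun x => by
  rw [Function.comp_apply, hψ (f x), hf x, Set.biUnion_image]
  rfl

theorem unique [MetricSpace M] [Finite X] [Fintype A] {c : A → ℝ≥0} (hc : ∀ a, c a < 1)
    (hσ : ∀ a, LipschitzWith (c a) (σ a)) {φ ψ : X → NonemptyCompacts M}
    (hφ : IsLTSSolution α σ φ) (hψ : IsLTSSolution α σ ψ) : φ = ψ := by
  have : Fintype X := Fintype.ofFinite X
  set C := Finset.univ.sup c
  have hC : C < 1 := (Finset.sup_lt_iff zero_lt_one).2 fun a _ => hc a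
  have hσC : ∀ a, LipschitzWith C (σ a) := fun a =>
    (hσ a).weaken (Finset.le_sup (Finset.mem_univ a))
  have hstep : ∀ x, edist (φ x) (ψ x) ≤ C * edist φ ψ := fun x =>
    calc edist (φ x) (ψ x) = hausdorffEDist (φ x : Set M) (ψ x) := rfl
      _ ≤ ⨆ p ∈ α x, hausdorffEDist (σ p.1 '' (φ p.2 : Set M)) (σ p.1 '' ψ p.2) := by
        rw [hφ x, hψ x]; exact hausdorffEDist_biUnion_le _ _ _
      _ ≤ C * edist φ ψ := iSup₂_le fun p _ => ((hσC p.1).hausdorffEDist_image_le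
          (φ p.2).isCompact (φ p.2).nonempty (ψ p.2).isCompact (ψ p.2).nonempty).trans
          (mul_le_mul_right (edist_le_pi_edist φ ψ p.2) _)
  exact eq_of_edist_eq_zero <| ENNReal.eq_zero_of_le_mul_of_lt_one (edist_ne_top φ ψ)
    (by exact_mod_cast hC) (edist_pi_le_iff.2 hstep)

end IsLTSSolution

theorem solution_factors_through_hom_general {X Y A M : Type} [Finite X] [Fintype A] [MetricSpace M]
    (α : X → Set (A × X)) (β : Y → Set (A × Y))
    (f : X → Y) (hf : ∀ x, β (f x) = (fun p : A × X => (p.1, f p.2)) '' α x)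
    (σ : A → M → M) (c : A → ℝ≥0) (hc : ∀ a, c a < 1)
    (hσ : ∀ a, LipschitzWith (c a) (σ a))
    (φα : X → NonemptyCompacts M)
    (hφα : ∀ x, (φα x : Set M) = ⋃ p ∈ α x, σ p.1 '' (φα p.2 : Set M))
    (φβ : Y → NonemptyCompacts M)
    (hφβ : ∀ y, (φβ y : Set M) = ⋃ p ∈ β y, σ p.1 '' (φβ p.2 : Set M)) :
    φα = φβ ∘ f :=
  IsLTSSolution.unique hc hσ hφα (IsLTSSolution.comp_hom hφβ hf)

/-- Solutions factor through LTS homomorphisms: if `f : X → Y` is a homomorphism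
of finite productive LTSs and `φα`, `φβ` are the (unique) solutions of `(X, α)`
and `(Y, β)` for a contraction operator interpretation `σ` on a nonempty
complete metric space, then `φα = φβ ∘ f`. -/
theorem solution_factors_through_hom {X Y A M : Type} [Finite X] [Finite Y]
    [Fintype A] [Nonempty A]
    [MetricSpace M] [CompleteSpace M] [Nonempty M]
    (α : X → Set (A × X)) (hαfin : ∀ x, (α x).Finite) (hαprod : ∀ x, α x ≠ ∅)
    (β : Y → Set (A × Y)) (hβfin : ∀ y, (β y).Finite) (hβprod : ∀ y, β y ≠ ∅)
    (f : X → Y) (hf : ∀ x, β (f x) = (fun p : A × X => (p.1, f p.2)) '' α x)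
    (σ : A → M → M) (c : A → ℝ≥0) (hc : ∀ a, c a < 1)
    (hσ : ∀ a, LipschitzWith (c a) (σ a))
    (φα : X → NonemptyCompacts M)
    (hφα : ∀ x, (φα x : Set M) = ⋃ p ∈ α x, σ p.1 '' (φα p.2 : Set M))
    (φβ : Y → NonemptyCompacts M)
    (hφβ : ∀ y, (φβ y : Set M) = ⋃ p ∈ β y, σ p.1 '' (φβ p.2 : Set M)) :
    φα = φβ ∘ f :=
  solution_factors_through_hom_general α β f hf σ c hc hσ φα hφα φβ hφβ
end

section
/- Let (X, α) be a finite productive labelled transition system over a finite nonempty alphabet A, and equip A^ω := ℕ → A with the metric d(s, t) = (1/2)^n where n is the least index with s(n) ≠ t(n). Then the map x ↦ str(x), sending each state to its (nonempty compact) set of emitted streams, is the unique solution of (X, α) for the prepend interpretation: for every x ∈ X, str(x) = ⋃_{(a,y) ∈ α x} prepend_a '' str(y), and any function ψ from X to nonempty compact subsets of A^ω satisfying these equations equals str. -/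
/-!
Both inclusions of `str x = ⋃_{(a,y) ∈ α x} prepend_a '' str y` are read off one letter at a
time; the hard one is König's lemma: among the finitely many `s 0`-successors of `x`, one must
carry arbitrarily long, hence all, prefixes of the tail of `s`.

For uniqueness, an induction on prefix length shows `ψ x ⊆ str x` for every solution `ψ`.
Conversely, unfolding the equations `n` times produces, for `s ∈ str x`, a point of `ψ x`
agreeing with `s` on its first `n` letters, so `s` lies in the closure of `ψ x`, which is
`ψ x` since compact sets are closed.
-/

open Filter Topology

/-- The stream `a·s`. -/
def prepend {A : Type} (a : A) (s : ℕ → A) : ℕ → A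
  | 0 => a
  | n + 1 => s n

namespace IsTrace

variable {X A : Type} {α : X → Set (A × X)}

theorem cons_iff {x : X} {a : A} {w : List A} :
    IsTrace α x (a :: w) ↔ ∃ y, (a, y) ∈ α x ∧ IsTrace α y w :=
  ⟨fun | .cons hy hw => ⟨_, hy, hw⟩, fun ⟨_, hy, hw⟩ => .cons hy hw⟩

theorem take {x : X} {w : List A} (h : IsTrace α x w) (m : ℕ) : IsTrace α x (w.take m) := by
  induction h generalizing m with
  | nil x => simpa using .nil x
  | cons hy _ ih =>
    cases m with
    | zero => exact .nil _
    | succ m => exact .cons hy (ih m)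

end IsTrace

section Streams

variable {A : Type}

theorem prepend_head_tail (s : ℕ → A) : prepend (s 0) (fun n => s (n + 1)) = s :=
  funext fun n => by cases n <;> rfl

theorem ofFn_succ_eq_cons (s : ℕ → A) (n : ℕ) :
    (List.ofFn fun i : Fin (n + 1) => s i) = s 0 :: List.ofFn fun i : Fin n => s (i + 1) := by
  simp [List.ofFn_succ]

theorem ofFn_eq_take_ofFn (s : ℕ → A) {m n : ℕ} (hmn : m ≤ n) :
    (List.ofFn fun i : Fin m => s i) = (List.ofFn fun i : Fin n => s i).take m :=
  List.ext_get (by simp [hmn]) fun _ _ _ => by simp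

theorem tendsto_of_eq_on_lt [TopologicalSpace A] {u : ℕ → ℕ → A} {s : ℕ → A}
    (hu : ∀ n, ∀ i < n, u n i = s i) : Tendsto u atTop (𝓝 s) :=
  tendsto_pi_nhds.2 fun i =>
    tendsto_const_nhds.congr' (eventually_atTop.2 ⟨i + 1, fun n hn => (hu n i hn).symm⟩)

end Streams

theorem exists_forall_of_antitone_of_finite {ι : Type*} {S : Set ι} (hS : S.Finite)
    {P : ℕ → ι → Prop} (hP : ∀ y, Antitone fun n => P n y) (h : ∀ n, ∃ y ∈ S, P n y) :
    ∃ y ∈ S, ∀ n, P n y := by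
  by_contra! hfail
  have : ∀ᶠ n in atTop, ∀ y ∈ S, ¬P n y :=
    hS.eventually_all.2 fun y hy =>
      let ⟨n, hn⟩ := hfail y hy
      eventually_atTop.2 ⟨n, fun m hm hPm => hn (hP y hm hPm)⟩
  obtain ⟨n, hn⟩ := this.exists
  obtain ⟨y, hy, hPy⟩ := h n
  exact hn y hy hPy

section Solutions

variable {X A : Type} {α : X → Set (A × X)} {ψ : X → Set (ℕ → A)} {x : X} {s : ℕ → A}

variable (α) in
def IsSolution (ψ : X → Set (ℕ → A)) : Prop :=
  ∀ x, ψ x = ⋃ p ∈ α x, prepend p.1 '' ψ p.2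

theorem mem_iUnion_prepend_image_iff {S : X → Set (ℕ → A)} :
    s ∈ ⋃ p ∈ α x, prepend p.1 '' S p.2 ↔ ∃ y, (s 0, y) ∈ α x ∧ (fun n => s (n + 1)) ∈ S y := by
  simp only [Set.mem_iUnion, Set.mem_image, exists_prop]
  constructor
  · rintro ⟨⟨a, y⟩, hy, t, ht, rfl⟩
    exact ⟨y, hy, ht⟩
  · rintro ⟨y, hy, ht⟩
    exact ⟨(s 0, y), hy, _, ht, prepend_head_tail s⟩

theorem IsSolution.mem_iff (h : IsSolution α ψ) :
    s ∈ ψ x ↔ ∃ y, (s 0, y) ∈ α x ∧ (fun n => s (n + 1)) ∈ ψ y := by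
  rw [h x]
  exact mem_iUnion_prepend_image_iff

theorem isTrace_ofFn_succ_iff {n : ℕ} :
    IsTrace α x (List.ofFn fun i : Fin (n + 1) => s i) ↔
      ∃ y, (s 0, y) ∈ α x ∧ IsTrace α y (List.ofFn fun i : Fin n => s (i + 1)) := by
  rw [ofFn_succ_eq_cons]
  exact IsTrace.cons_iff

theorem IsTrace.of_ofFn_le {m n : ℕ} (h : IsTrace α x (List.ofFn fun i : Fin n => s i))
    (hmn : m ≤ n) : IsTrace α x (List.ofFn fun i : Fin m => s i) :=
  ofFn_eq_take_ofFn s hmn ▸ h.take m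

theorem mem_str_iff (hfin : (α x).Finite) :
    s ∈ str α x ↔ ∃ y, (s 0, y) ∈ α x ∧ (fun n => s (n + 1)) ∈ str α y := by
  constructor
  · intro hs
    have hsucc : {y | (s 0, y) ∈ α x}.Finite := hfin.preimage (Prod.mk_right_injective _).injOn
    exact exists_forall_of_antitone_of_finite hsucc
      (fun _ _ _ hmn h => IsTrace.of_ofFn_le (s := fun n => s (n + 1)) h hmn)
      fun n => isTrace_ofFn_succ_iff.1 (hs (n + 1))
  · rintro ⟨y, hy, ht⟩ (_ | n)
    · exact .nil x
    · exact isTrace_ofFn_succ_iff.2 ⟨y, hy, ht n⟩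

theorem isSolution_str (hfin : ∀ x, (α x).Finite) : IsSolution α (str α) :=
  fun x => Set.ext fun _ => (mem_str_iff (hfin x)).trans mem_iUnion_prepend_image_iff.symm

theorem IsSolution.subset_str (h : IsSolution α ψ) (x : X) : ψ x ⊆ str α x := by
  intro s hs n
  induction n generalizing x s with
  | zero => exact .nil x
  | succ n ih =>
    obtain ⟨y, hy, ht⟩ := h.mem_iff.1 hs
    exact isTrace_ofFn_succ_iff.2 ⟨y, hy, ih y ht⟩

theorem IsSolution.exists_mem_eq_on_lt (h : IsSolution α ψ) (hne : ∀ x, (ψ x).Nonempty)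
    (hfin : ∀ x, (α x).Finite) (n : ℕ) (hs : s ∈ str α x) : ∃ u ∈ ψ x, ∀ i < n, u i = s i := by
  induction n generalizing x s with
  | zero =>
    obtain ⟨u, hu⟩ := hne x
    exact ⟨u, hu, fun i hi => absurd hi i.not_lt_zero⟩
  | succ n ih =>
    obtain ⟨y, hy, ht⟩ := (mem_str_iff (hfin x)).1 hs
    obtain ⟨u, hu, hus⟩ := ih ht
    refine ⟨prepend (s 0) u, h.mem_iff.2 ⟨y, hy, hu⟩, ?_⟩
    rintro (_ | i) hi
    · rfl
    · exact hus i (Nat.lt_of_succ_lt_succ hi)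

theorem IsSolution.str_subset_closure [TopologicalSpace A] (h : IsSolution α ψ)
    (hne : ∀ x, (ψ x).Nonempty) (hfin : ∀ x, (α x).Finite) (x : X) :
    str α x ⊆ closure (ψ x) := fun _ hs => by
  choose u hu hus using fun n => h.exists_mem_eq_on_lt hne hfin n hs
  exact mem_closure_of_tendsto (tendsto_of_eq_on_lt hus) (.of_forall hu)

theorem IsSolution.eq_str [TopologicalSpace A] (h : IsSolution α ψ) (hne : ∀ x, (ψ x).Nonempty)
    (hclosed : ∀ x, IsClosed (ψ x)) (hfin : ∀ x, (α x).Finite) : ψ = str α :=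
  funext fun x =>
    (h.subset_str x).antisymm ((h.str_subset_closure hne hfin x).trans (hclosed x).closure_subset)

end Solutions

theorem str_unique_solution_prepend_general {X A : Type}
    [TopologicalSpace A] [DiscreteTopology A]
    (α : X → Set (A × X)) (hfin : ∀ x, (α x).Finite) :
    (∀ x, str α x = ⋃ p ∈ α x, prepend p.1 '' str α p.2) ∧
    ∀ ψ : X → Set (ℕ → A),
      (∀ x, (ψ x).Nonempty ∧ IsCompact (ψ x)) →
      (∀ x, ψ x = ⋃ p ∈ α x, prepend p.1 '' ψ p.2) →
      ψ = fun x => str α x :=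
  ⟨isSolution_str hfin, fun _ hψ hψeq =>
    IsSolution.eq_str hψeq (fun x => (hψ x).1) (fun x => (hψ x).2.isClosed) hfin⟩

/-- For a finite productive LTS `(X, α)` over a finite nonempty alphabet, the map
`x ↦ str x` is the unique solution of `(X, α)` for the prepend interpretation on
`A^ω = ℕ → A`: it satisfies `str x = ⋃_{(a,y) ∈ α x} prepend_a '' str y`, and any
assignment `ψ` of nonempty compact subsets of `A^ω` satisfying these equations
equals `str`. -/
theorem str_unique_solution_prepend {X A : Type} [Finite X] [Fintype A] [Nonempty A]
    [TopologicalSpace A] [DiscreteTopology A]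
    (α : X → Set (A × X)) (hfin : ∀ x, (α x).Finite) (hprod : ∀ x, α x ≠ ∅) :
    (∀ x, str α x = ⋃ p ∈ α x, prepend p.1 '' str α p.2) ∧
    ∀ ψ : X → Set (ℕ → A),
      (∀ x, (ψ x).Nonempty ∧ IsCompact (ψ x)) →
      (∀ x, ψ x = ⋃ p ∈ α x, prepend p.1 '' ψ p.2) →
      ψ = fun x => str α x :=
  str_unique_solution_prepend_general α hfin
end

section
/- Let (X, β) and (Y, β′) be finite labelled Markov chains over a finite nonempty alphabet A, with trace measure families ν and ν′, and let x ∈ X and y ∈ Y. Then ν(x) = ν′(y) if and only if for every nonempty complete metric space M with its Borel σ-algebra and every contraction operator interpretation σ of A on M, (σ_ω)_♯ ν(x) = (σ_ω)_♯ ν′(y). -/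
open Filter Topology MeasureTheory
open scoped NNReal ENNReal

/-- The cylinder set of a word `w`: all streams beginning with `w`. -/
def cyl {A : Type} (w : List A) : Set (ℕ → A) :=
  {s | ∀ i : Fin w.length, s i.val = w.get i}

/-- `wordWeight β x [a₁, …, aₙ]` is the sum over all tuples `(x₁, …, xₙ) ∈ Xⁿ` of
the products `β x (a₁, x₁) · β x₁ (a₂, x₂) ⋯ β x_{n−1} (aₙ, xₙ)`. -/
def wordWeight {X A : Type} [Fintype X] (β : X → A × X → ℝ≥0) : X → List A → ℝ≥0
  | _, [] => 1
  | x, a :: w => ∑ y : X, β x (a, y) * wordWeight β y w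

private def consStr {A : Type} (a : A) (s : ℕ → A) : ℕ → A :=
  fun n => Nat.casesOn n a s

private lemma foldr_consStr_get {A : Type} (w : List A) (p : ℕ → A) :
    ∀ (i : ℕ) (hi : i < w.length), (w.foldr (fun a m => consStr a m) p) i = w.get ⟨i, hi⟩ := by
  induction w with
  | nil => intro i hi; simp at hi
  | cons a w ih =>
    intro i hi
    cases i with
    | zero => rfl
    | succ j =>
      simp only [List.foldr_cons]
      exact ih j (by simpa using hi)

/-- Two states of finite labelled Markov chains have equal trace measures iff
their subfractal measures (pushforwards of the trace measures along the limit
map `σω`) agree for every contraction operator interpretation on every nonempty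
complete metric space with its Borel σ-algebra. -/
theorem trace_measure_eq_iff_fractal_measures_eq {X Y A : Type}
    [Fintype X] [Fintype Y] [Fintype A] [Nonempty A]
    [TopologicalSpace A] [DiscreteTopology A] [MeasurableSpace A] [BorelSpace A]
    (β : X → A × X → ℝ≥0) (hβ : ∀ x, ∑ p : A × X, β x p = 1)
    (β' : Y → A × Y → ℝ≥0) (hβ' : ∀ y, ∑ p : A × Y, β' y p = 1)
    (ν : X → Measure (ℕ → A)) (hνprob : ∀ x, IsProbabilityMeasure (ν x))
    (hν : ∀ (x : X) (w : List A), ν x (cyl w) = (wordWeight β x w : ℝ≥0∞))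
    (ν' : Y → Measure (ℕ → A)) (hν'prob : ∀ y, IsProbabilityMeasure (ν' y))
    (hν' : ∀ (y : Y) (w : List A), ν' y (cyl w) = (wordWeight β' y w : ℝ≥0∞))
    (x : X) (y : Y) :
    ν x = ν' y ↔
      ∀ (M : Type) [MetricSpace M] [CompleteSpace M] [Nonempty M]
        [MeasurableSpace M] [BorelSpace M]
        (σ : A → M → M) (c : A → ℝ≥0), (∀ a, c a < 1) →
        (∀ a, LipschitzWith (c a) (σ a)) →
        ∀ σω : (ℕ → A) → M,
          (∀ (s : ℕ → A) (p : M), Tendsto (fun n => seqApp σ s p n) atTop (𝓝 (σω s))) →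
          Measure.map σω (ν x) = Measure.map σω (ν' y) := by
  constructor
  · intro h M _ _ _ _ _ σ c hc hlip σω hσω
    rw [h]
  · intro H
    have hborel : (inferInstance : MeasurableSpace (ℕ → A)) = borel (ℕ → A) :=
      BorelSpace.measurable_eq
    letI : MetricSpace (ℕ → A) := PiNat.metricSpace
    haveI : CompleteSpace (ℕ → A) := PiNat.completeSpace
    haveI : BorelSpace (ℕ → A) := ⟨hborel⟩
    have hlip : ∀ a : A, LipschitzWith (1/2 : ℝ≥0) (consStr a) := by
      intro a
      apply LipschitzWith.of_dist_le_mul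
      intro s t
      rcases eq_or_ne s t with rfl | hst
      · simp [PiNat.dist_self]
      · rw [PiNat.dist_eq_of_ne hst]
        have : consStr a s ∈ PiNat.cylinder (consStr a t) (PiNat.firstDiff s t + 1) := by
          rw [PiNat.mem_cylinder_iff]
          intro i hi
          cases i with
          | zero => rfl
          | succ j =>
            show s j = t j
            exact PiNat.apply_eq_of_lt_firstDiff (by omega)
        have h2 := PiNat.mem_cylinder_iff_dist_le.1 this
        calc dist (consStr a s) (consStr a t) ≤ (1/2 : ℝ) ^ (PiNat.firstDiff s t + 1) := h2
          _ = ((1/2 : ℝ≥0) : ℝ) * (1/2 : ℝ) ^ PiNat.firstDiff s t := by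
              push_cast; ring
    have htend : ∀ (s : ℕ → A) (p : ℕ → A),
        Tendsto (fun n => seqApp (fun a m => consStr a m) s p n) atTop (𝓝 (id s)) := by
      intro s p
      rw [tendsto_iff_dist_tendsto_zero]
      have hb : ∀ n : ℕ, dist (seqApp (fun a m => consStr a m) s p n) (id s) ≤ (1/2 : ℝ) ^ (n+1) := by
        intro n
        apply PiNat.mem_cylinder_iff_dist_le.1
        rw [PiNat.mem_cylinder_iff]
        intro i hi
        have hlen : i < (List.ofFn fun j : Fin (n + 1) => s j.val).length := by
          simpa using hi
        have := foldr_consStr_get (List.ofFn fun j : Fin (n + 1) => s j.val) p i hlen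
        simp only [seqApp]
        rw [this, List.get_ofFn]
        rfl
      have h0 : Tendsto (fun n : ℕ => (1/2 : ℝ) ^ (n+1)) atTop (𝓝 0) := by
        have := tendsto_pow_atTop_nhds_zero_of_lt_one (le_of_lt one_half_pos) (by norm_num : (1/2:ℝ) < 1)
        exact (this.comp (tendsto_add_atTop_nat 1))
      exact squeeze_zero (fun n => dist_nonneg) hb h0
    have key := H (ℕ → A) (fun a m => consStr a m) (fun _ => 1/2) (fun _ => by rw [one_div]; exact inv_lt_one_of_one_lt₀ one_lt_two)
      hlip id htend
    simpa [Measure.map_id] using key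
end

section
/- Let K = {0} ∪ { (1/2)^n | n ∈ ℕ } ⊆ ℝ, and let σ_a, σ_b : ℝ → ℝ be given by σ_a(r) = r/2 and σ_b(r) = r/2 + 1/2. Then there is no finite nonempty family f₁, …, f_n of functions, where each f_i is the composition of a nonempty finite sequence of maps each equal to σ_a or σ_b, such that K = f₁(K) ∪ ⋯ ∪ f_n(K). -/
/-- `applyWord l` is the composition of the maps `σ_a (r) = r/2` (for `true`) and
`σ_b (r) = r/2 + 1/2` (for `false`) along the list `l`, applied to `r`. -/
noncomputable def applyWord (l : List Bool) (r : ℝ) : ℝ :=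
  l.foldr (fun b y => if b then y / 2 else y / 2 + 1 / 2) r

lemma applyWord_cons (b : Bool) (l : List Bool) (r : ℝ) :
    applyWord (b :: l) r =
      (if b then applyWord l r / 2 else applyWord l r / 2 + 1 / 2) := rfl

lemma applyWord_le_one (l : List Bool) {x : ℝ} (hx : x ≤ 1) : applyWord l x ≤ 1 := by
  induction l with
  | nil => exact hx
  | cons b t ih =>
    rw [applyWord_cons]
    cases b <;> simp <;> linarith

lemma applyWord_sub (l : List Bool) (x y : ℝ) :
    applyWord l x - applyWord l y = (x - y) / 2 ^ l.length := by
  induction l with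
  | nil => simp [applyWord]
  | cons b t ih =>
    rw [applyWord_cons, applyWord_cons]
    cases b <;>
      simp only [if_true, Bool.false_eq_true, if_false, List.length_cons, pow_succ] <;>
      rw [show (x - y) / (2 ^ t.length * 2) =
        ((x - y) / 2 ^ t.length) / 2 by ring, ← ih] <;> ring

/-- The set `K = {0} ∪ { (1/2)^n | n ∈ ℕ } ⊆ ℝ` is not the attractor of any
iterated function system whose maps are compositions of nonempty finite
sequences of the contractions `σ_a (r) = r/2` and `σ_b (r) = r/2 + 1/2`:
there is no finite nonempty family of such compositions `f₁, …, f_n` with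
`K = f₁(K) ∪ ⋯ ∪ f_n(K)`. -/
theorem K_not_self_similar_for_sigma_ab :
    ¬ ∃ (n : ℕ) (w : Fin n → List Bool), 0 < n ∧ (∀ i, w i ≠ []) ∧
      ({0} ∪ {x : ℝ | ∃ m : ℕ, x = (1 / 2 : ℝ) ^ m}) =
        ⋃ i : Fin n, applyWord (w i) ''
          ({0} ∪ {x : ℝ | ∃ m : ℕ, x = (1 / 2 : ℝ) ^ m}) := by
  rintro ⟨n, w, -, hne, hK⟩
  set K : Set ℝ := {0} ∪ {x : ℝ | ∃ m : ℕ, x = (1 / 2 : ℝ) ^ m} with hKdef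
  have h1K : (1 : ℝ) ∈ K := Or.inr ⟨0, by norm_num⟩
  have hhalfK : (1 / 2 : ℝ) ∈ K := Or.inr ⟨1, by norm_num⟩
  -- 1 is in the union, so some word maps some point of K to 1
  have h1U : (1 : ℝ) ∈ ⋃ i : Fin n, applyWord (w i) '' K := hK ▸ h1K
  obtain ⟨i, x, hxK, hx1⟩ : ∃ i x, x ∈ K ∧ applyWord (w i) x = 1 := by
    obtain ⟨i, x, hx, he⟩ := Set.mem_iUnion.mp h1U
    exact ⟨i, x, hx, he⟩
  have hxle : x ≤ 1 := by
    rcases hxK with h | ⟨m, hm⟩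
    · simp at h; simp [h]
    · rw [hm]; exact pow_le_one₀ (by norm_num) (by norm_num)
  -- the word maps 1 to 1
  have hw1 : applyWord (w i) 1 = 1 := by
    have hle := applyWord_le_one (w i) (le_refl (1 : ℝ))
    have hsub := applyWord_sub (w i) 1 x
    have : 0 ≤ (1 - x) / 2 ^ (w i).length :=
      div_nonneg (by linarith) (by positivity)
    linarith
  -- hence it maps 1/2 to 1 - (1/2)^(len+1)
  have hlen : 1 ≤ (w i).length := List.length_pos_iff.mpr (hne i)
  have hsub := applyWord_sub (w i) 1 (1 / 2)
  have hwhalf : applyWord (w i) (1 / 2) = 1 - (1 / 2) / 2 ^ (w i).length := by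
    rw [hw1] at hsub; linarith
  -- bounds on t := applyWord (w i) (1/2)
  have hpowle : (1 / 2 : ℝ) / 2 ^ (w i).length ≤ 1 / 4 := by
    have : (2 : ℝ) ^ 1 ≤ 2 ^ (w i).length :=
      pow_le_pow_right₀ (by norm_num) hlen
    rw [div_le_div_iff₀ (by positivity) (by norm_num)]
    nlinarith
  have hpowpos : (0 : ℝ) < (1 / 2 : ℝ) / 2 ^ (w i).length := by positivity
  -- t is in the union, hence in K
  have htU : applyWord (w i) (1 / 2) ∈ ⋃ j : Fin n, applyWord (w j) '' K :=
    Set.mem_iUnion.mpr ⟨i, ⟨1 / 2, hhalfK, rfl⟩⟩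
  have htK : applyWord (w i) (1 / 2) ∈ K := hK ▸ htU
  rcases htK with h | ⟨m, hm⟩
  · simp only [Set.mem_singleton_iff] at h
    rw [hwhalf] at h; linarith
  · rw [hwhalf] at hm
    rcases Nat.eq_zero_or_pos m with hm0 | hm1
    · rw [hm0, pow_zero] at hm; linarith
    · have : (1 / 2 : ℝ) ^ m ≤ (1 / 2) ^ 1 :=
        pow_le_pow_of_le_one (by norm_num) (by norm_num) hm1
      rw [pow_one] at this
      linarith
end
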